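/- Define the perfect binary trees by P_0 = leaf and P_{h+1} = node(P_h, P_h), and the sequence a_0 = 1, a_{i+1} = a_i² + 1. Then N(P_h) = a_h for every h ≥ 0, and there exists a real number α with 1 < α < 2 such that N(P_h) = ⌊α^{2^h}⌋ for every h ≥ 0; that is, the full binary tree with n = 2^h leaves has exactly ⌊α^n⌋ cuts. -/
import Mathlib


/-- A strongly binary tree: either a single leaf, or an internal node with an
ordered pair of strongly binary subtrees. -/
inductive SBTree where
  | leaf : SBTree
  | node : SBTree → SBTree → SBTree
deriving DecidableEq

/-- The number of cuts `N(T)` of a strongly binary tree. -/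
def SBTree.ncuts : SBTree → ℕ
  | .leaf => 1
  | .node l r => 1 + l.ncuts * r.ncuts

/-- For the perfect binary trees `P 0 = leaf`, `P (h+1) = node (P h) (P h)` and the
sequence `a 0 = 1`, `a (i+1) = (a i)^2 + 1`, one has `N(P h) = a h` for all `h`, and
there is a real `α` with `1 < α < 2` such that `N(P h) = ⌊α^(2^h)⌋` for all `h`:
the full binary tree with `n = 2^h` leaves has exactly `⌊α^n⌋` cuts. -/
theorem ncuts_perfect_binary (P : ℕ → SBTree)
    (hP0 : P 0 = SBTree.leaf)
    (hPs : ∀ h, P (h + 1) = SBTree.node (P h) (P h))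
    (a : ℕ → ℕ) (ha0 : a 0 = 1) (has : ∀ i, a (i + 1) = (a i) ^ 2 + 1) :
    (∀ h, (P h).ncuts = a h) ∧
    ∃ α : ℝ, 1 < α ∧ α < 2 ∧ ∀ h : ℕ, ⌊α ^ (2 ^ h)⌋₊ = (P h).ncuts := by
  have ha1 : ∀ i, 1 ≤ a i := by
    intro i
    cases i with
    | zero => omega
    | succ n => rw [has]; omega
  have hN : ∀ h, (P h).ncuts = a h := by
    intro h
    induction h with
    | zero => rw [hP0, ha0]; rfl
    | succ n ih => rw [hPs, has, SBTree.ncuts, ih]; ring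
  refine ⟨hN, ?_⟩
  -- key combinatorial lemma
  have key : ∀ m k, a (m + k) + 1 ≤ (a m + 1) ^ (2 ^ k) := by
    intro m k
    induction k with
    | zero => simp
    | succ k ih =>
      have hM : 2 ≤ (a m + 1) ^ 2 ^ k := by
        calc 2 ≤ a m + 1 := by have := ha1 m; omega
        _ = (a m + 1) ^ 1 := (pow_one _).symm
        _ ≤ (a m + 1) ^ 2 ^ k := Nat.pow_le_pow_right (by have := ha1 m; omega) (Nat.one_le_two_pow)
      have e1 : a (m + (k + 1)) = a (m + k) ^ 2 + 1 := by
        rw [show m + (k + 1) = (m + k) + 1 by ring, has]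
      have e2 : (a m + 1) ^ 2 ^ (k + 1) = ((a m + 1) ^ 2 ^ k) ^ 2 := by
        rw [pow_succ, pow_mul]
      rw [e1, e2]
      nlinarith [ih, hM]
  -- the sequence c k = (a k)^(1/2^k)
  set c : ℕ → ℝ := fun k => (a k : ℝ) ^ (((2 ^ k : ℕ) : ℝ)⁻¹) with hc_def
  have hc_nonneg : ∀ k, 0 ≤ c k := fun k => Real.rpow_nonneg (by positivity) _
  have hc_pow : ∀ k, (c k) ^ (2 ^ k : ℕ) = (a k : ℝ) := by
    intro k
    exact Real.rpow_inv_natCast_pow (by positivity) (by positivity)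
  -- boundedness
  have hc_le2 : ∀ k, c k ≤ 2 := by
    intro k
    refine le_of_pow_le_pow_left₀ (n := 2 ^ k) (by positivity) (by norm_num) ?_
    rw [hc_pow]
    have := key 0 k
    rw [ha0] at this
    simp only [Nat.zero_add] at this
    have h2 : (a k : ℝ) + 1 ≤ (2 : ℝ) ^ (2 ^ k) := by exact_mod_cast this
    linarith
  set α : ℝ := sSup (Set.range c) with hα_def
  have hbdd : BddAbove (Set.range c) := ⟨2, by rintro x ⟨k, rfl⟩; exact hc_le2 k⟩
  have hne : (Set.range c).Nonempty := ⟨c 0, 0, rfl⟩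
  have hcα : ∀ k, c k ≤ α := fun k => le_csSup hbdd ⟨k, rfl⟩
  have hα_nonneg : 0 ≤ α := le_trans (hc_nonneg 0) (hcα 0)
  -- lower bound: a h ≤ α^(2^h)
  have hlow : ∀ h, (a h : ℝ) ≤ α ^ (2 ^ h) := by
    intro h
    rw [← hc_pow h]
    exact pow_le_pow_left₀ (hc_nonneg h) (hcα h) _
  -- c is monotone
  have hc_mono : Monotone c := by
    apply monotone_nat_of_le_succ
    intro k
    refine le_of_pow_le_pow_left₀ (n := 2 ^ (k + 1)) (by positivity) (hc_nonneg _) ?_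
    have e : (c k) ^ (2 ^ (k + 1)) = ((a k : ℝ)) ^ 2 := by
      rw [pow_succ, pow_mul, hc_pow]
    rw [e, hc_pow]
    have : (a k) ^ 2 ≤ a (k + 1) := by rw [has]; omega
    exact_mod_cast this
  -- upper bound: α^(2^h) < a h + 1
  have hub : ∀ h, α ^ (2 ^ h) < (a h : ℝ) + 1 := by
    intro h
    set y : ℝ := ((a (h + 1) + 1 : ℕ) : ℝ) ^ (((2 ^ (h + 1) : ℕ) : ℝ)⁻¹) with hy_def
    have hy_nonneg : 0 ≤ y := Real.rpow_nonneg (by positivity) _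
    have hy_pow : y ^ (2 ^ (h + 1) : ℕ) = ((a (h + 1) + 1 : ℕ) : ℝ) :=
      Real.rpow_inv_natCast_pow (by positivity) (by positivity)
    have hαy : α ≤ y := by
      apply csSup_le hne
      rintro x ⟨k, rfl⟩
      rcases le_or_gt k (h + 1) with hk | hk
      · calc c k ≤ c (h + 1) := hc_mono hk
          _ ≤ y := by
            refine le_of_pow_le_pow_left₀ (n := 2 ^ (h + 1)) (by positivity) hy_nonneg ?_
            rw [hc_pow, hy_pow]
            exact_mod_cast Nat.le_succ _
      · obtain ⟨j, rfl⟩ : ∃ j, k = (h + 1) + j := ⟨k - (h + 1), by omega⟩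
        refine le_of_pow_le_pow_left₀ (n := 2 ^ ((h + 1) + j)) (by positivity) hy_nonneg ?_
        rw [hc_pow]
        have e : y ^ (2 ^ ((h + 1) + j)) = (y ^ (2 ^ (h + 1))) ^ (2 ^ j) := by
          rw [← pow_mul, pow_add]
        rw [e, hy_pow]
        have := key (h + 1) j
        have h2 : ((a ((h + 1) + j) : ℝ)) + 1 ≤ ((a (h + 1) + 1 : ℕ) : ℝ) ^ (2 ^ j) := by
          exact_mod_cast this
        linarith
    have h1 : α ^ (2 ^ (h + 1)) ≤ (a (h + 1) : ℝ) + 1 := by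
      calc α ^ (2 ^ (h + 1)) ≤ y ^ (2 ^ (h + 1)) := pow_le_pow_left₀ hα_nonneg hαy _
        _ = ((a (h + 1) + 1 : ℕ) : ℝ) := hy_pow
        _ = (a (h + 1) : ℝ) + 1 := by push_cast; ring
    have h2 : (α ^ (2 ^ h)) ^ 2 < ((a h : ℝ) + 1) ^ 2 := by
      have e : (α ^ (2 ^ h)) ^ 2 = α ^ (2 ^ (h + 1)) := by rw [← pow_mul, pow_succ]
      have hah : (1 : ℝ) ≤ (a h : ℝ) := by exact_mod_cast ha1 h
      have e2 : (a (h + 1) : ℝ) = (a h : ℝ) ^ 2 + 1 := by exact_mod_cast has h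
      rw [e]
      nlinarith [h1]
    exact lt_of_pow_lt_pow_left₀ 2 (by positivity) h2
  refine ⟨α, ?_, ?_, ?_⟩
  · -- 1 < α
    have h1 : c 1 ≤ α := hcα 1
    have h2 : (1 : ℝ) < c 1 := by
      have := hc_pow 1
      have ha1v : a 1 = 2 := by rw [has, ha0]; norm_num
      refine lt_of_pow_lt_pow_left₀ (2 ^ 1) (hc_nonneg 1) ?_
      rw [this, ha1v]
      norm_num
    linarith
  · -- α < 2
    have := hub 0
    rw [ha0] at this
    norm_num at this
    exact this
  · intro h
    rw [hN h]
    rw [Nat.floor_eq_iff (by positivity)]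
    push_cast
    exact ⟨hlow h, hub h⟩
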